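/- arXiv:1511.02068 — 3 statements merged into one kernel-verified Lean document; each statement's English description precedes it below -/
import Mathlib

section
/- For all real numbers x, x', ξ, α', we have |e(x+α') + e(x)| + |e(x'+ξ) + e(x')| ≤ 4 - 8·(sin(π·‖ξ - α'‖_ℤ / 4))², where e(t) = exp(2πi t) and ‖y‖_ℤ denotes the distance from y to the nearest integer. -/
open Complex Real

/-- `e(t) = exp(2πit)`. -/
noncomputable def e (t : ℝ) : ℂ := Complex.exp (2 * Real.pi * Complex.I * t)

/-! Since `|e(s + t) + e(s)| = 2 |cos πt| = 2 cos (π‖t‖_ℤ)`, the left side is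
`2 cos πa + 2 cos πb` with `a = ‖α'‖_ℤ` and `b = ‖ξ‖_ℤ` in `[0, 1/2]`. Sum-to-product bounds this by
`4 cos (π(a + b)/2)`, and the triangle inequality on `ℝ/ℤ` gives `d = ‖ξ - α'‖_ℤ ≤ a + b`, so the
bound is at most `4 cos (πd/2) = 4 - 8 sin² (πd/4)`. -/

theorem Complex.norm_exp_mul_I_add_exp_mul_I (u v : ℝ) :
    ‖exp (u * I) + exp (v * I)‖ = 2 * |Real.cos ((u - v) / 2)| := by
  have h : exp (u * I) + exp (v * I)
      = exp (((u + v) / 2 : ℝ) * I) * (2 * Complex.cos ((u - v) / 2 : ℝ)) := by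
    rw [two_cos, mul_add, ← exp_add, ← exp_add]
    push_cast
    ring_nf
  rw [h, norm_mul, norm_exp_ofReal_mul_I, one_mul, norm_mul, ← ofReal_cos, norm_real,
    Real.norm_eq_abs, Complex.norm_ofNat]

theorem norm_e_add_e (s t : ℝ) : ‖e (s + t) + e s‖ = 2 * |Real.cos (π * t)| := by
  convert Complex.norm_exp_mul_I_add_exp_mul_I (2 * π * (s + t)) (2 * π * s) using 4
  · simp only [e]; push_cast; ring_nf
  · simp only [e]; push_cast; ring_nf
  · ring

theorem abs_cos_pi_mul (t : ℝ) : |Real.cos (π * t)| = Real.cos (π * |t - round t|) := by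
  have hr : |t - round t| ≤ 1 / 2 := abs_sub_round t
  have hπ : π * |t - round t| ≤ π / 2 := by nlinarith [pi_pos]
  have ht : π * t = π * (t - round t) + round t * π := by ring
  rw [ht, cos_add_int_mul_pi, abs_mul, abs_neg_one_zpow, one_mul, ← Real.cos_abs,
    abs_mul, abs_of_pos pi_pos]
  exact abs_of_nonneg (cos_nonneg_of_neg_pi_div_two_le_of_le
    (by nlinarith [pi_pos, abs_nonneg (t - round t)]) hπ)

theorem abs_sub_sub_round_le (x y : ℝ) :
    |x - y - round (x - y)| ≤ |x - round x| + |y - round y| := by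
  have h := norm_sub_le (x : UnitAddCircle) (y : UnitAddCircle)
  rwa [← AddCircle.coe_sub, UnitAddCircle.norm_eq, UnitAddCircle.norm_eq,
    UnitAddCircle.norm_eq] at h

theorem Real.cos_add_cos_le_two_cos_half {u v : ℝ} (h₁ : -π ≤ u + v) (h₂ : u + v ≤ π) :
    Real.cos u + Real.cos v ≤ 2 * Real.cos ((u + v) / 2) := by
  have hnonneg : 0 ≤ Real.cos ((u + v) / 2) :=
    cos_nonneg_of_neg_pi_div_two_le_of_le (by linarith) (by linarith)
  rw [Real.cos_add_cos]
  nlinarith [Real.cos_le_one ((u - v) / 2)]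

theorem stmt_4 (x x' ξ α' : ℝ) :
    ‖e (x + α') + e x‖ + ‖e (x' + ξ) + e x'‖
      ≤ 4 - 8 * Real.sin (Real.pi * |ξ - α' - round (ξ - α')| / 4) ^ 2 := by
  rw [norm_e_add_e, norm_e_add_e, abs_cos_pi_mul, abs_cos_pi_mul]
  have hd : |ξ - α' - round (ξ - α')| ≤ |ξ - round ξ| + |α' - round α'| :=
    abs_sub_sub_round_le ξ α'
  set a := |α' - round α'|
  set b := |ξ - round ξ|
  set d := |ξ - α' - round (ξ - α')|
  have ha : a ≤ 1 / 2 := abs_sub_round α'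
  have hb : b ≤ 1 / 2 := abs_sub_round ξ
  have ha₀ : 0 ≤ a := abs_nonneg _
  have hb₀ : 0 ≤ b := abs_nonneg _
  have hsum : Real.cos (π * a) + Real.cos (π * b) ≤ 2 * Real.cos ((π * a + π * b) / 2) :=
    Real.cos_add_cos_le_two_cos_half (by nlinarith [pi_pos]) (by nlinarith [pi_pos])
  have hmono : Real.cos ((π * a + π * b) / 2) ≤ Real.cos (2 * (π * d / 4)) :=
    Real.cos_le_cos_of_nonneg_of_le_pi (by positivity) (by nlinarith [pi_pos])
      (by nlinarith [pi_pos])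
  rw [Real.cos_two_mul_eq_one_sub] at hmono
  linarith
end

section
/- Let q ≥ 2, β ≥ 2 and ρ, λ, κ nonnegative integers with ρ < λ and κ ≥ 1. Let a : ℕ → ℤ be a β-recursive sequence with propagation function g, α ∈ ℝ, f(n) = exp(2πi α a(n)), and f^{(λ)}(n) = exp(2πi α a(n mod q^λ)). Let l > q^ρ and k₁ < q^κ be integers. Suppose there exists m with 0 ≤ m < ρ - β + 2 such that ε_{κ+m}(l q^κ + k₁) ≠ q-1, and letting i be the smallest such m, suppose there exists j with i + β - 2 < j < ρ and ε_{κ+j}(l q^κ + k₁) ≠ 0. Then for every integer k₂ < q^κ, f(l q^κ + k₁ + k₂)·conj(f(l q^κ + k₁)) = f^{(κ+ρ)}(l q^κ + k₁ + k₂)·conj(f^{(κ+ρ)}(l q^κ + k₁)). -/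
/-!
Iterating the recursion `T` times expresses `a n` as `a (n / q ^ T)` plus a sum of values of `g`
on windows of `β` consecutive digits of `n`, all of them below position `T + β - 1`. Take
`N = l q^κ + k₁` and `T = κ + i + 1`. Since the digit of `N` at `κ + i` is not `q - 1`, adding
`k₂ < q^κ` causes no carry past position `T`, so `N` and `N + k₂` (and likewise their residues
mod `q^(κ+ρ)`) have the same quotient by `q^T`. The windows stay below `κ + ρ` and hence only see
digits that reduction mod `q^(κ+ρ)` preserves, while the nonzero digit at `κ + j` keeps all four
numbers large enough for the recursion to apply. Hence `a (N + k₂) - a N` is unchanged when both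
arguments are reduced mod `q^(κ+ρ)`.
-/

/-- The `i`-th digit of `n` in base `q`. -/
def digit (q i n : ℕ) : ℕ := n / q ^ i % q

open Finset

section Digits

variable {q : ℕ}

lemma digit_lt (hq : 0 < q) (p n : ℕ) : digit q p n < q := Nat.mod_lt _ hq

lemma digit_div_pow (s t n : ℕ) : digit q t (n / q ^ s) = digit q (s + t) n := by
  rw [digit, digit, Nat.div_div_eq_div_mul, ← pow_add]

lemma digit_div (t n : ℕ) : digit q t (n / q) = digit q (t + 1) n := by
  simpa only [pow_one, add_comm 1] using digit_div_pow (q := q) 1 t n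

lemma digit_mod_pow {p μ : ℕ} (n : ℕ) (h : p < μ) : digit q p (n % q ^ μ) = digit q p n := by
  have hsplit : q ^ μ = q ^ p * q ^ (μ - p) := by rw [← pow_add, Nat.add_sub_cancel' h.le]
  rw [digit, digit, hsplit, Nat.mod_mul_right_div_self,
    Nat.mod_mod_of_dvd _ (dvd_pow_self q (by omega))]

lemma sum_digit_mul_pow (n m : ℕ) : ∑ t : Fin m, digit q t n * q ^ (t : ℕ) = n % q ^ m := by
  induction m with
  | zero => simp [Nat.mod_one]
  | succ m ih =>
    rw [Fin.sum_univ_castSucc]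
    simp only [Fin.val_castSucc, Fin.val_last, ih]
    rw [pow_succ, Nat.mod_mul, digit]
    ring

lemma pow_le_of_digit_ne_zero {p n : ℕ} (h : digit q p n ≠ 0) : q ^ p ≤ n := by
  by_contra hlt
  exact h (by rw [digit, Nat.div_eq_of_lt (not_le.mp hlt), Nat.zero_mod])

lemma mod_pow_succ_add_lt {p n k : ℕ} (hq : 0 < q) (hd : digit q p n ≠ q - 1) (hk : k ≤ q ^ p) :
    n % q ^ (p + 1) + k < q ^ (p + 1) := by
  have hdle : digit q p n + 1 ≤ q - 1 := by have := digit_lt hq p n; omega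
  have hlow : n % q ^ p < q ^ p := Nat.mod_lt _ (pow_pos hq p)
  have hmul : q ^ p * (digit q p n + 1) + q ^ p ≤ q ^ p * q := by
    calc q ^ p * (digit q p n + 1) + q ^ p ≤ q ^ p * (q - 1) + q ^ p := by gcongr
      _ = q ^ p * q := by rw [← Nat.mul_add_one, Nat.sub_add_cancel hq]
  rw [pow_succ, Nat.mod_mul]
  change n % q ^ p + q ^ p * digit q p n + k < q ^ p * q
  nlinarith

end Digits

section NoCarry

variable {n k m : ℕ}

lemma add_div_of_mod_add_lt (h : n % m + k < m) : (n + k) / m = n / m := by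
  have hk : k < m := by omega
  rw [Nat.add_div_eq_of_add_mod_lt (by rwa [Nat.mod_eq_of_lt hk]), Nat.div_eq_of_lt hk, add_zero]

lemma add_mod_of_mod_add_lt (h : n % m + k < m) : (n + k) % m = n % m + k := by
  have hk : k < m := by omega
  rw [Nat.add_mod_of_add_mod_lt (by rwa [Nat.mod_eq_of_lt hk]), Nat.mod_eq_of_lt hk]

lemma add_mod_of_dvd_of_mod_add_lt {m' : ℕ} (hdvd : m ∣ m') (h : n % m + k < m) :
    (n + k) % m' = n % m' + k := by
  obtain ⟨b, rfl⟩ := hdvd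
  rw [Nat.mod_mul, Nat.mod_mul, add_mod_of_mod_add_lt h, add_div_of_mod_add_lt h]
  ring

end NoCarry

section Recursion

variable {q β : ℕ} {a : ℕ → ℤ} {g : (Fin β → ℕ) → ℕ}

theorem recursion_step (hq : 0 < q) (hβ : 0 < β)
    (hrec : ∀ n : ℕ, 1 ≤ n → ∀ ω : Fin β → ℕ, (∀ i, ω i < q) →
      a (q ^ β * n + ∑ i : Fin β, ω i * q ^ (i : ℕ)) =
        a (q ^ (β - 1) * n +
            ∑ i : Fin (β - 1), ω ⟨i.val + 1, by have := i.isLt; omega⟩ * q ^ (i : ℕ)) + g ω)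
    (hrec0 : ∀ ω : Fin β → ℕ, (∀ i, ω i < q) → ω ⟨β - 1, by omega⟩ ≠ 0 →
      a (∑ i : Fin β, ω i * q ^ (i : ℕ)) =
        a (∑ i : Fin (β - 1), ω ⟨i.val + 1, by have := i.isLt; omega⟩ * q ^ (i : ℕ)) + g ω)
    {n : ℕ} (hn : q ^ (β - 1) ≤ n) :
    a n = a (n / q) + g (fun t => digit q t n) := by
  have hdigits : ∀ t, digit q t n < q := fun t => digit_lt hq t n
  have hlow : ∑ t : Fin β, digit q t n * q ^ (t : ℕ) = n % q ^ β := sum_digit_mul_pow n β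
  have hhigh :
      ∑ t : Fin (β - 1), digit q ((t : ℕ) + 1) n * q ^ (t : ℕ) = n / q % q ^ (β - 1) := by
    rw [← sum_digit_mul_pow (n / q) (β - 1)]
    simp only [digit_div]
  have hpow : q ^ β = q * q ^ (β - 1) := by rw [← pow_succ', Nat.sub_add_cancel hβ]
  rcases le_or_gt (q ^ β) n with hbig | hsmall
  · have hquot : q ^ (β - 1) * (n / q ^ β) + n / q % q ^ (β - 1) = n / q := by
      rw [hpow, ← Nat.div_div_eq_div_mul, Nat.div_add_mod]
    have := hrec (n / q ^ β) ((Nat.one_le_div_iff (by positivity)).mpr hbig) _ (fun t => hdigits t)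
    rwa [hlow, hhigh, Nat.div_add_mod, hquot] at this
  · have hlead : n / q ^ (β - 1) < q := by
      rwa [Nat.div_lt_iff_lt_mul (by positivity), ← hpow]
    have htop : digit q (β - 1) n ≠ 0 := by
      rw [digit, Nat.mod_eq_of_lt hlead]
      exact (Nat.div_pos hn (by positivity)).ne'
    have hsmall' : n / q < q ^ (β - 1) := by
      rwa [Nat.div_lt_iff_lt_mul hq, mul_comm, ← hpow]
    have := hrec0 _ (fun t => hdigits t) htop
    rwa [hlow, hhigh, Nat.mod_eq_of_lt hsmall, Nat.mod_eq_of_lt hsmall'] at this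

variable (q β g) in
def propagationSum (T n : ℕ) : ℤ := ∑ s ∈ range T, (g (fun t => digit q (s + t) n) : ℤ)

lemma propagationSum_mod_pow {T μ : ℕ} (n : ℕ) (h : T + β ≤ μ + 1) :
    propagationSum q β g T (n % q ^ μ) = propagationSum q β g T n := by
  refine sum_congr rfl fun s hs => ?_
  have hs : s < T := mem_range.mp hs
  congr 2
  funext t
  exact digit_mod_pow n (by omega)

theorem eq_add_propagationSum (hq : 0 < q)
    (hstep : ∀ n, q ^ (β - 1) ≤ n → a n = a (n / q) + g (fun t => digit q t n)) :
    ∀ T n, (∀ s < T, q ^ (β - 1 + s) ≤ n) → a n = a (n / q ^ T) + propagationSum q β g T n := by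
  intro T
  induction T with
  | zero => intro n _; simp [propagationSum]
  | succ T ih =>
    intro n hn
    have hlarge : q ^ (β - 1) ≤ n / q ^ T :=
      (Nat.le_div_iff_mul_le (pow_pos hq T)).mpr (pow_add q _ T ▸ hn T T.lt_succ_self)
    have hlast := hstep _ hlarge
    simp only [digit_div_pow, Nat.div_div_eq_div_mul, ← pow_succ] at hlast
    rw [ih n fun s hs => hn s (by omega), hlast, propagationSum, propagationSum, sum_range_succ]
    ring

end Recursion

lemma exp_mul_conj_exp (α : ℝ) (x y : ℤ) :
    Complex.exp (2 * Real.pi * Complex.I * α * x) *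
        (starRingEnd ℂ) (Complex.exp (2 * Real.pi * Complex.I * α * y)) =
      Complex.exp (2 * Real.pi * Complex.I * α * ((x - y : ℤ) : ℂ)) := by
  rw [← Complex.exp_conj, ← Complex.exp_add]
  congr 1
  simp only [map_mul, map_ofNat, Complex.conj_ofReal, Complex.conj_I, map_intCast]
  push_cast
  ring

theorem stmt_11 (q β ρ κ : ℕ) (hq : 2 ≤ q) (hβ : 2 ≤ β)
    (a : ℕ → ℤ) (g : (Fin β → ℕ) → ℕ)
    (hrec : ∀ n : ℕ, 1 ≤ n → ∀ ω : Fin β → ℕ, (∀ i, ω i < q) →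
      a (q ^ β * n + ∑ i : Fin β, ω i * q ^ (i : ℕ)) =
        a (q ^ (β - 1) * n +
            ∑ i : Fin (β - 1), ω ⟨i.val + 1, by have := i.isLt; omega⟩ * q ^ (i : ℕ)) + g ω)
    (hrec0 : ∀ ω : Fin β → ℕ, (∀ i, ω i < q) → ω ⟨β - 1, by omega⟩ ≠ 0 →
      a (∑ i : Fin β, ω i * q ^ (i : ℕ)) =
        a (∑ i : Fin (β - 1), ω ⟨i.val + 1, by have := i.isLt; omega⟩ * q ^ (i : ℕ)) + g ω)
    (α : ℝ) (f : ℕ → ℂ)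
    (hf : ∀ n, f n = Complex.exp (2 * Real.pi * Complex.I * α * a n))
    (ftr : ℕ → ℕ → ℂ)
    (hftr : ∀ μ n, ftr μ n = Complex.exp (2 * Real.pi * Complex.I * α * a (n % q ^ μ)))
    (l k₁ : ℕ)
    (i : ℕ)
    (hdi : digit q (κ + i) (l * q ^ κ + k₁) ≠ q - 1)
    (j : ℕ) (hj₁ : i + β - 2 < j) (hj₂ : j < ρ)
    (hdj : digit q (κ + j) (l * q ^ κ + k₁) ≠ 0) :
    ∀ k₂ : ℕ, k₂ < q ^ κ →
      f (l * q ^ κ + k₁ + k₂) * (starRingEnd ℂ) (f (l * q ^ κ + k₁)) =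
        ftr (κ + ρ) (l * q ^ κ + k₁ + k₂) * (starRingEnd ℂ) (ftr (κ + ρ) (l * q ^ κ + k₁)) := by
  intro k₂ hk₂
  set N := l * q ^ κ + k₁
  set M := N % q ^ (κ + ρ)
  have hq0 : 0 < q := by omega
  have hcarryN : N % q ^ (κ + i + 1) + k₂ < q ^ (κ + i + 1) :=
    mod_pow_succ_add_lt hq0 hdi (hk₂.le.trans (Nat.pow_le_pow_right hq0 (by omega)))
  have hcarryM : M % q ^ (κ + i + 1) + k₂ < q ^ (κ + i + 1) := by
    rwa [Nat.mod_mod_of_dvd _ (pow_dvd_pow q (by omega))]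
  have hmod : (N + k₂) % q ^ (κ + ρ) = M + k₂ :=
    add_mod_of_dvd_of_mod_add_lt (pow_dvd_pow q (by omega)) hcarryN
  have hexpand : ∀ n, q ^ (κ + j) ≤ n →
      a n = a (n / q ^ (κ + i + 1)) + propagationSum q β g (κ + i + 1) n := fun n hn =>
    eq_add_propagationSum hq0 (fun _ => recursion_step hq0 (by omega) hrec hrec0)
      _ n fun s hs => (Nat.pow_le_pow_right hq0 (by omega)).trans hn
  have hN : q ^ (κ + j) ≤ N := pow_le_of_digit_ne_zero hdj
  have hM : q ^ (κ + j) ≤ M := pow_le_of_digit_ne_zero (by rwa [digit_mod_pow _ (by omega)])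
  have key : a (N + k₂) - a N = a (M + k₂) - a M := by
    rw [hexpand N hN, hexpand (N + k₂) (hN.trans le_self_add), hexpand M hM,
      hexpand (M + k₂) (hM.trans le_self_add), add_div_of_mod_add_lt hcarryN,
      add_div_of_mod_add_lt hcarryM, ← hmod, propagationSum_mod_pow _ (by omega),
      propagationSum_mod_pow _ (by omega)]
    ring
  rw [hf, hf, hftr, hftr, hmod, exp_mul_conj_exp, exp_mul_conj_exp, key]
end

section
/- Let q ≥ 2 and β ≥ 2, and fix ρ ≥ β. For q^ρ ≤ l < q^λ, define B_i (for 0 ≤ i ≤ ρ - β + 1) as the set of such l with ε_i(l) ≠ q-1, ε_m(l) = q-1 for all m < i, and ε_j(l) = 0 for all j with i + β - 2 < j < ρ. Then all sets B_i have the same cardinality, namely #B_i = #B_0 for each 0 ≤ i ≤ ρ - β + 1. -/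
section Digits

variable {q : ℕ}

theorem add_mul_eq_mul_sub_one_iff {Q a d : ℕ} (hQ : 0 < Q) (hq : 0 < q) (ha : a < Q) :
    a + Q * d = Q * q - 1 ↔ a = Q - 1 ∧ d = q - 1 := by
  have hmax : (Q - 1) + Q * (q - 1) = Q * q - 1 := by
    have : Q ≤ Q * q := Nat.le_mul_of_pos_right Q hq
    rw [Nat.mul_sub_one]; omega
  constructor
  · intro h
    have h₁ := (Nat.div_mod_unique hQ).2 ⟨h, ha⟩
    have h₂ := (Nat.div_mod_unique hQ).2 ⟨hmax, Nat.sub_lt hQ one_pos⟩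
    omega
  · rintro ⟨rfl, rfl⟩
    exact hmax

theorem forall_digit_eq_pred_iff (hq : 0 < q) (l i : ℕ) :
    (∀ m < i, digit q m l = q - 1) ↔ l % q ^ i = q ^ i - 1 := by
  induction i with
  | zero => simp [Nat.mod_one]
  | succ k ih =>
    rw [Nat.forall_lt_succ_right, ih, Nat.mod_pow_succ, pow_succ,
      add_mul_eq_mul_sub_one_iff (pow_pos hq k) hq (Nat.mod_lt _ (pow_pos hq k))]
    rfl

theorem forall_digit_eq_zero_iff (hq : 0 < q) (l : ℕ) {s t : ℕ} (hst : s ≤ t) :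
    (∀ j, s ≤ j → j < t → digit q j l = 0) ↔ l % q ^ t < q ^ s := by
  induction t, hst using Nat.le_induction with
  | base => exact iff_of_true (fun j hs hj => absurd hj (by omega)) (Nat.mod_lt l (pow_pos hq s))
  | succ t hst ih =>
    have hsplit : (∀ j, s ≤ j → j < t + 1 → digit q j l = 0) ↔
        (∀ j, s ≤ j → j < t → digit q j l = 0) ∧ digit q t l = 0 :=
      ⟨fun h => ⟨fun j hs ht => h j hs (by omega), h t hst (by omega)⟩,
        fun ⟨h, ht⟩ j hs hj => (Nat.lt_succ_iff_lt_or_eq.1 hj).elim (h j hs) (· ▸ ht)⟩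
    have hpow : q ^ s ≤ q ^ t := Nat.pow_le_pow_right hq hst
    rw [hsplit, ih, Nat.mod_pow_succ]
    change _ ∧ l / q ^ t % q = 0 ↔ _
    generalize l / q ^ t % q = d
    generalize l % q ^ t = r
    rcases Nat.eq_zero_or_pos d with rfl | hd
    · simp
    · have : q ^ t ≤ q ^ t * d := Nat.le_mul_of_pos_right _ hd
      omega

theorem digit_mod_pow_s18 {j ρ : ℕ} (hj : j < ρ) (l : ℕ) : digit q j (l % q ^ ρ) = digit q j l := by
  unfold digit
  rw [show q ^ ρ = q ^ j * q ^ (ρ - j) by rw [← pow_add]; congr 1; omega,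
    Nat.mod_mul_right_div_self, Nat.mod_mod_of_dvd _ (dvd_pow_self q (by omega))]

theorem mul_add_pred_lt_pow (hq : 0 < q) {m n : ℕ} (hm : m < q ^ n) (i : ℕ) :
    q ^ i * m + (q ^ i - 1) < q ^ (i + n) := by
  have hle : q ^ i * (m + 1) ≤ q ^ i * q ^ n := Nat.mul_le_mul_left _ hm
  have := pow_pos hq i
  rw [mul_add_one] at hle
  rw [pow_add]
  omega

end Digits

def digitBlock (q β ρ lam i : ℕ) : Set ℕ :=
  {l | q ^ ρ ≤ l ∧ l < q ^ lam ∧ digit q i l ≠ q - 1 ∧ (∀ m < i, digit q m l = q - 1) ∧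
    ∀ j, i + β - 2 < j → j < ρ → digit q j l = 0}

def blockParams (q β ρ lam : ℕ) : Set (ℕ × ℕ) :=
  {p | 1 ≤ p.1 ∧ p.1 < q ^ (lam - ρ) ∧ p.2 < q ^ (β - 1) ∧ p.2 % q ≠ q - 1}

def blockEncode (q ρ i : ℕ) (p : ℕ × ℕ) : ℕ := q ^ ρ * p.1 + (q ^ i * p.2 + (q ^ i - 1))

def blockDecode (q β ρ i : ℕ) (l : ℕ) : ℕ × ℕ := (l / q ^ ρ, l / q ^ i % q ^ (β - 1))

section Blocks

variable {q β ρ lam i : ℕ}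

theorem mem_digitBlock_iff (hq : 0 < q) (hβ : 2 ≤ β) (hi : i + (β - 1) ≤ ρ) (l : ℕ) :
    l ∈ digitBlock q β ρ lam i ↔ q ^ ρ ≤ l ∧ l < q ^ lam ∧ l / q ^ i % q ≠ q - 1 ∧
      l % q ^ i = q ^ i - 1 ∧ l % q ^ ρ < q ^ (i + (β - 1)) := by
  have hzero : (∀ j, i + β - 2 < j → j < ρ → digit q j l = 0) ↔
      ∀ j, i + (β - 1) ≤ j → j < ρ → digit q j l = 0 :=
    forall_congr' fun j => imp_congr_left (by omega)
  rw [digitBlock, Set.mem_ofPred_eq, forall_digit_eq_pred_iff hq, hzero,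
    forall_digit_eq_zero_iff hq l hi]
  rfl

theorem blockEncode_mod_pow (hq : 0 < q) {p : ℕ × ℕ} (hp : p.2 < q ^ (β - 1)) {k : ℕ}
    (hk : i + (β - 1) ≤ k) (hkρ : k ≤ ρ) :
    blockEncode q ρ i p % q ^ k = q ^ i * p.2 + (q ^ i - 1) := by
  have hlow := mul_add_pred_lt_pow hq hp i
  rw [blockEncode, ← Nat.mod_mod_of_dvd _ (pow_dvd_pow q hkρ), Nat.mul_add_mod,
    Nat.mod_eq_of_lt (hlow.trans_le (Nat.pow_le_pow_right hq (hk.trans hkρ))),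
    Nat.mod_eq_of_lt (hlow.trans_le (Nat.pow_le_pow_right hq hk))]

theorem mapsTo_blockEncode (hq : 0 < q) (hβ : 2 ≤ β) (hi : i + (β - 1) ≤ ρ) :
    Set.MapsTo (blockEncode q ρ i) (blockParams q β ρ lam) (digitBlock q β ρ lam i) := by
  rintro ⟨h, m⟩ ⟨hh, hhlam, hm, hmq⟩
  dsimp only at hh hhlam hm hmq
  have hρlam : ρ ≤ lam := by
    by_contra hlt
    rw [Nat.sub_eq_zero_of_le (by omega), pow_zero] at hhlam
    omega
  have hlow := mul_add_pred_lt_pow hq hm i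
  have hlowρ : q ^ i * m + (q ^ i - 1) < q ^ ρ := hlow.trans_le (Nat.pow_le_pow_right hq hi)
  have hmodρ := blockEncode_mod_pow hq (p := (h, m)) hm hi le_rfl
  rw [mem_digitBlock_iff hq hβ hi]
  refine ⟨?_, ?_, ?_, ?_, hmodρ ▸ hlow⟩
  · exact le_add_right (Nat.le_mul_of_pos_right _ hh)
  · calc blockEncode q ρ i (h, m) < q ^ ρ * (h + 1) := by
          rw [blockEncode, mul_add_one]; exact Nat.add_lt_add_left hlowρ _
      _ ≤ q ^ ρ * q ^ (lam - ρ) := Nat.mul_le_mul_left _ hhlam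
      _ = q ^ lam := by rw [← pow_add]; congr 1; omega
  · change digit q i _ ≠ _
    rw [← digit_mod_pow_s18 (by omega : i < ρ), hmodρ, digit, Nat.mul_add_div (pow_pos hq i),
      Nat.div_eq_of_lt (Nat.sub_lt (pow_pos hq i) one_pos), add_zero]
    exact hmq
  · rw [← Nat.mod_mod_of_dvd _ (pow_dvd_pow q (by omega : i ≤ ρ)), hmodρ, Nat.mul_add_mod,
      Nat.mod_eq_of_lt (Nat.sub_lt (pow_pos hq i) one_pos)]

theorem mapsTo_blockDecode (hq : 0 < q) (hβ : 2 ≤ β) (hi : i + (β - 1) ≤ ρ) :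
    Set.MapsTo (blockDecode q β ρ i) (digitBlock q β ρ lam i) (blockParams q β ρ lam) := by
  intro l hl
  obtain ⟨hlρ, hllam, hdigit, -, -⟩ := (mem_digitBlock_iff hq hβ hi l).1 hl
  refine ⟨(Nat.one_le_div_iff (pow_pos hq ρ)).2 hlρ, ?_, Nat.mod_lt _ (pow_pos hq _), ?_⟩
  · refine (Nat.div_lt_iff_lt_mul (pow_pos hq ρ)).2 (hllam.trans_le ?_)
    rw [← pow_add]
    exact Nat.pow_le_pow_right hq (by omega)
  · rwa [blockDecode, Nat.mod_mod_of_dvd _ (dvd_pow_self q (by omega : β - 1 ≠ 0))]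

theorem leftInvOn_blockEncode_blockDecode (hq : 0 < q) (hβ : 2 ≤ β) (hi : i + (β - 1) ≤ ρ) :
    Set.LeftInvOn (blockEncode q ρ i) (blockDecode q β ρ i) (digitBlock q β ρ lam i) := by
  intro l hl
  obtain ⟨-, -, -, hmodi, hmodρ⟩ := (mem_digitBlock_iff hq hβ hi l).1 hl
  have hlow : l % q ^ ρ = l % q ^ (i + (β - 1)) := by
    rw [← Nat.mod_mod_of_dvd l (pow_dvd_pow q hi), Nat.mod_eq_of_lt hmodρ]
  rw [pow_add, Nat.mod_mul, hmodi] at hlow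
  have := Nat.div_add_mod l (q ^ ρ)
  simp only [blockEncode, blockDecode]
  omega

theorem rightInvOn_blockEncode_blockDecode (hq : 0 < q) (hi : i + (β - 1) ≤ ρ) :
    Set.RightInvOn (blockEncode q ρ i) (blockDecode q β ρ i) (blockParams q β ρ lam) := by
  rintro ⟨h, m⟩ ⟨-, -, hm, -⟩
  have hlow := mul_add_pred_lt_pow hq hm i
  simp only [blockDecode, Prod.mk.injEq]
  constructor
  · rw [blockEncode, Nat.mul_add_div (pow_pos hq ρ),
      Nat.div_eq_of_lt (hlow.trans_le (Nat.pow_le_pow_right hq hi)), add_zero]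
  · rw [← Nat.mod_mul_right_div_self, ← pow_add, blockEncode_mod_pow hq hm le_rfl hi,
      Nat.mul_add_div (pow_pos hq i), Nat.div_eq_of_lt (Nat.sub_lt (pow_pos hq i) one_pos),
      add_zero]

theorem ncard_digitBlock (hq : 0 < q) (hβ : 2 ≤ β) (hi : i + (β - 1) ≤ ρ) :
    (digitBlock q β ρ lam i).ncard = (blockParams q β ρ lam).ncard :=
  (Set.InvOn.bijOn ⟨leftInvOn_blockEncode_blockDecode hq hβ hi,
    rightInvOn_blockEncode_blockDecode hq hi⟩ (mapsTo_blockDecode hq hβ hi)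
    (mapsTo_blockEncode hq hβ hi)).ncard_eq

end Blocks

theorem stmt_18_general (q β ρ lam : ℕ) (hq : 2 ≤ q) (hβ : 2 ≤ β)
    (hρ : β ≤ ρ) :
    ∀ i, i ≤ ρ - β + 1 →
      {l : ℕ | q ^ ρ ≤ l ∧ l < q ^ lam ∧ digit q i l ≠ q - 1 ∧
          (∀ m < i, digit q m l = q - 1) ∧
          ∀ j, i + β - 2 < j → j < ρ → digit q j l = 0}.ncard
        = {l : ℕ | q ^ ρ ≤ l ∧ l < q ^ lam ∧ digit q 0 l ≠ q - 1 ∧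
            (∀ m < 0, digit q m l = q - 1) ∧
            ∀ j, 0 + β - 2 < j → j < ρ → digit q j l = 0}.ncard := by
  intro i hi
  have hq' : 0 < q := by omega
  exact (ncard_digitBlock hq' hβ (by omega)).trans (ncard_digitBlock hq' hβ (by omega)).symm

theorem stmt_18 (q β ρ lam : ℕ) (hq : 2 ≤ q) (hβ : 2 ≤ β)
    (hρ : β ≤ ρ) (hlt : ρ < lam) :
    ∀ i, i ≤ ρ - β + 1 →
      {l : ℕ | q ^ ρ ≤ l ∧ l < q ^ lam ∧ digit q i l ≠ q - 1 ∧
          (∀ m < i, digit q m l = q - 1) ∧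
          ∀ j, i + β - 2 < j → j < ρ → digit q j l = 0}.ncard
        = {l : ℕ | q ^ ρ ≤ l ∧ l < q ^ lam ∧ digit q 0 l ≠ q - 1 ∧
            (∀ m < 0, digit q m l = q - 1) ∧
            ∀ j, 0 + β - 2 < j → j < ρ → digit q j l = 0}.ncard :=
  stmt_18_general q β ρ lam hq hβ hρ
end
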